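/- Let ω > 0, ε > 0, and set c := 3 + √(3/2). Let G be an m×m complex matrix, V an m×m diagonal complex matrix, and U^i ∈ ℂ^m a vector each of whose components has modulus 1. (a) For any vector W ∈ ℂ^m with ω²‖GW‖_∞ < 1, every component of U^i + ω²GW is nonzero. (b) Assume ω²‖GV‖ < 1/2, set b₀ := (1 − 2ω²‖GV‖)/(1 − ω²‖GV‖) and X := V(I − ω²GV)⁻¹U^i, and let X̂ ∈ ℂ^m satisfy ‖X̂ − X‖_∞ ≤ cε. If b₀ > ω²cε‖G‖, then ω²‖GX̂‖_∞ < 1; hence every component of U^i + ω²GX̂ is nonzero, the diagonal matrix V̂ := diag[X̂/(U^i + ω²GX̂)] (entrywise quotient) is well-defined, and the support of the diagonal of V̂ equals the support of X̂. -/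

import Mathlib

/-- The maximum-absolute-row-sum norm of a complex matrix (the operator norm
induced by the `ℓ∞` vector norm). -/
noncomputable def rowSumNorm {m : ℕ} (M : Matrix (Fin m) (Fin m) ℂ) : ℝ :=
  ⨆ i, ∑ j, ‖M i j‖

/-- The `ℓ∞` norm of a complex vector. -/
noncomputable def supNorm {m : ℕ} (W : Fin m → ℂ) : ℝ :=
  ⨆ j, ‖W j‖

/-! With `t = ω²‖GV‖ < 1`, the vector `y = (I - ω²GV)⁻¹Uⁱ` solves `y = Uⁱ + ω²GVy`, so
`‖y‖_∞ ≤ 1 / (1 - t)`; the same estimate applied to a kernel vector shows that `I - ω²GV` is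
invertible. Since `GX = GVy`, we get `ω²‖GX̂‖_∞ ≤ ω²‖G‖‖X̂ - X‖_∞ + t / (1 - t) < b₀ + t / (1 - t) = 1`.
A perturbation of sup norm `< 1` cannot cancel a unimodular entry, so `Uⁱ + ω²GX̂` has no zero
entry and the quotient `X̂ / (Uⁱ + ω²GX̂)` vanishes exactly where `X̂` does. -/

open Matrix
open scoped Matrix.Norms.Operator

theorem ciSup_norm_eq_pi_norm {ι E : Type*} [Fintype ι] [SeminormedAddCommGroup E] (f : ι → E) :
    ⨆ i, ‖f i‖ = ‖f‖ :=
  le_antisymm (Real.iSup_le (norm_le_pi_norm f) (norm_nonneg f))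
    ((pi_norm_le_iff_of_nonneg (Real.iSup_nonneg fun _ => norm_nonneg _)).2
      (le_ciSup (Set.finite_range _).bddAbove))

theorem supNorm_eq_norm {m : ℕ} (W : Fin m → ℂ) : supNorm W = ‖W‖ :=
  ciSup_norm_eq_pi_norm W

theorem rowSumNorm_eq_norm {m : ℕ} (M : Matrix (Fin m) (Fin m) ℂ) : rowSumNorm M = ‖M‖ := by
  -- the `L∞` operator norm is the sup norm of the `ℓ¹` norms of the rows
  change _ = ‖fun i => WithLp.toLp 1 (M i)‖
  simp only [rowSumNorm, ← ciSup_norm_eq_pi_norm, PiLp.norm_eq_of_L1]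

theorem add_ne_zero_of_norm_lt {E : Type*} [SeminormedAddCommGroup E] {u w : E}
    (h : ‖w‖ < ‖u‖) : u + w ≠ 0 := fun huw => by
  rw [eq_neg_of_add_eq_zero_right huw, norm_neg] at h
  exact lt_irrefl _ h

namespace Matrix

variable {n 𝕜 : Type*} [Fintype n] [DecidableEq n] [NormedField 𝕜] {A : Matrix n n 𝕜}

theorem norm_le_div_one_sub_of_one_sub_mulVec_eq (hA : ‖A‖ < 1) {y u : n → 𝕜}
    (h : (1 - A) *ᵥ y = u) : ‖y‖ ≤ ‖u‖ / (1 - ‖A‖) := by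
  have hy : y = u + A *ᵥ y := by rw [← h, sub_mulVec, one_mulVec, sub_add_cancel]
  have : ‖y‖ ≤ ‖u‖ + ‖A‖ * ‖y‖ := calc
    ‖y‖ = ‖u + A *ᵥ y‖ := congrArg _ hy
    _ ≤ ‖u‖ + ‖A *ᵥ y‖ := norm_add_le _ _
    _ ≤ ‖u‖ + ‖A‖ * ‖y‖ := add_le_add_right (linfty_opNorm_mulVec A y) _
  rw [le_div_iff₀ (sub_pos.2 hA)]
  linarith

theorem det_one_sub_ne_zero_of_norm_lt_one (hA : ‖A‖ < 1) : (1 - A).det ≠ 0 := fun hdet => by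
  obtain ⟨v, hv, hker⟩ := exists_mulVec_eq_zero_iff.2 hdet
  have := norm_le_div_one_sub_of_one_sub_mulVec_eq hA hker
  rw [norm_zero, zero_div] at this
  exact hv (norm_le_zero_iff.1 this)

theorem norm_inv_one_sub_mulVec_le (hA : ‖A‖ < 1) (u : n → 𝕜) :
    ‖(1 - A)⁻¹ *ᵥ u‖ ≤ ‖u‖ / (1 - ‖A‖) :=
  norm_le_div_one_sub_of_one_sub_mulVec_eq hA <| by
    rw [mulVec_mulVec, mul_nonsing_inv _ (det_one_sub_ne_zero_of_norm_lt_one hA).isUnit,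
      one_mulVec]

theorem norm_smul_mulVec_lt_one_of_norm_sub_le {G D : Matrix n n 𝕜} {z : 𝕜} {u x : n → 𝕜}
    {δ : ℝ} (hGD : ‖z‖ * ‖G * D‖ < 1) (hu : ‖u‖ ≤ 1)
    (hx : ‖x - D *ᵥ ((1 - z • (G * D))⁻¹ *ᵥ u)‖ ≤ δ)
    (hb : ‖z‖ * δ * ‖G‖ < (1 - 2 * (‖z‖ * ‖G * D‖)) / (1 - ‖z‖ * ‖G * D‖)) :
    ‖z‖ * ‖G *ᵥ x‖ < 1 := by
  set t := ‖z‖ * ‖G * D‖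
  set y := (1 - z • (G * D))⁻¹ *ᵥ u
  have ht : 0 < 1 - t := sub_pos.2 hGD
  have hy : ‖y‖ ≤ 1 / (1 - t) := by
    refine (norm_inv_one_sub_mulVec_le (by rwa [norm_smul]) u).trans ?_
    rw [norm_smul]
    gcongr
  have hGx : ‖G *ᵥ x‖ ≤ ‖G‖ * δ + ‖G * D‖ * ‖y‖ := calc
    ‖G *ᵥ x‖ = ‖G *ᵥ (x - D *ᵥ y) + (G * D) *ᵥ y‖ := by
      rw [mulVec_sub, ← mulVec_mulVec, sub_add_cancel]
    _ ≤ ‖G‖ * ‖x - D *ᵥ y‖ + ‖G * D‖ * ‖y‖ :=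
      (norm_add_le _ _).trans (add_le_add (linfty_opNorm_mulVec _ _) (linfty_opNorm_mulVec _ _))
    _ ≤ ‖G‖ * δ + ‖G * D‖ * ‖y‖ := by gcongr
  have hty : t * ‖y‖ ≤ t / (1 - t) := by
    rw [← mul_one_div]
    exact mul_le_mul_of_nonneg_left hy (by positivity)
  have hsum : (1 - 2 * t) / (1 - t) + t / (1 - t) = 1 := by
    field_simp
    ring
  calc ‖z‖ * ‖G *ᵥ x‖ ≤ ‖z‖ * δ * ‖G‖ + t * ‖y‖ := by
        nlinarith [mul_le_mul_of_nonneg_left hGx (norm_nonneg z)]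
    _ < 1 := by linarith

end Matrix

theorem stmt_7_general (m : ℕ) (ω ε : ℝ) (c : ℝ)
    (G : Matrix (Fin m) (Fin m) ℂ) (v : Fin m → ℂ)
    (Ui : Fin m → ℂ) (hUi : ∀ j, ‖Ui j‖ = 1) :
    (∀ W : Fin m → ℂ, ω ^ 2 * supNorm (G.mulVec W) < 1 →
      ∀ j, Ui j + (ω ^ 2 : ℂ) * G.mulVec W j ≠ 0) ∧
    (ω ^ 2 * rowSumNorm (G * Matrix.diagonal v) < 1 / 2 →
      ∀ X Xh : Fin m → ℂ,
        X = (Matrix.diagonal v).mulVec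
          (((1 - (ω ^ 2 : ℂ) • (G * Matrix.diagonal v))⁻¹).mulVec Ui) →
        supNorm (Xh - X) ≤ c * ε →
        (1 - 2 * (ω ^ 2 * rowSumNorm (G * Matrix.diagonal v))) /
            (1 - ω ^ 2 * rowSumNorm (G * Matrix.diagonal v)) >
          ω ^ 2 * c * ε * rowSumNorm G →
        ω ^ 2 * supNorm (G.mulVec Xh) < 1 ∧
        (∀ j, Ui j + (ω ^ 2 : ℂ) * G.mulVec Xh j ≠ 0) ∧
        (∀ j, Xh j / (Ui j + (ω ^ 2 : ℂ) * G.mulVec Xh j) ≠ 0 ↔ Xh j ≠ 0)) := by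
  have hω : ‖(ω ^ 2 : ℂ)‖ = ω ^ 2 := by
    rw [norm_pow, Complex.norm_real, Real.norm_eq_abs, sq_abs]
  have hne : ∀ W : Fin m → ℂ, ω ^ 2 * ‖G *ᵥ W‖ < 1 →
      ∀ j, Ui j + (ω ^ 2 : ℂ) * (G *ᵥ W) j ≠ 0 := fun W hW j => by
    refine add_ne_zero_of_norm_lt ?_
    rw [norm_mul, hω, hUi]
    exact (mul_le_mul_of_nonneg_left (norm_le_pi_norm _ j) (sq_nonneg ω)).trans_lt hW
  simp only [supNorm_eq_norm, rowSumNorm_eq_norm]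
  refine ⟨hne, fun hGD X Xh hX hXh hb => ?_⟩
  have hUi_le : ‖Ui‖ ≤ 1 := (pi_norm_le_iff_of_nonneg zero_le_one).2 fun j => (hUi j).le
  have hlt : ω ^ 2 * ‖G *ᵥ Xh‖ < 1 := by
    rw [← hω] at hGD hb ⊢
    subst hX
    exact norm_smul_mulVec_lt_one_of_norm_sub_le (by linarith) hUi_le hXh
      (by linarith)
  exact ⟨hlt, hne Xh hlt, fun j => by rw [div_ne_zero_iff, and_iff_left (hne Xh hlt j)]⟩

/-- (a) For any `W` with `ω²‖GW‖_∞ < 1`, every component of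
`Uⁱ + ω²GW` is nonzero.  (b) If `ω²‖GV‖ < 1/2`, `X = V(I−ω²GV)⁻¹Uⁱ`,
`‖X̂ − X‖_∞ ≤ (3+√(3/2))ε` and `b₀ > ω²(3+√(3/2))ε‖G‖`, then `ω²‖GX̂‖_∞ < 1`,
every component of `Uⁱ + ω²GX̂` is nonzero, and the entrywise quotient
`V̂ = diag[X̂/(Uⁱ + ω²GX̂)]` has the same support as `X̂`. -/
theorem stmt_7 (m : ℕ) (hm : 1 ≤ m) (ω ε : ℝ) (hω : 0 < ω) (hε : 0 < ε)
    (c : ℝ) (hc : c = 3 + Real.sqrt (3 / 2))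
    (G : Matrix (Fin m) (Fin m) ℂ) (v : Fin m → ℂ)
    (Ui : Fin m → ℂ) (hUi : ∀ j, ‖Ui j‖ = 1) :
    (∀ W : Fin m → ℂ, ω ^ 2 * supNorm (G.mulVec W) < 1 →
      ∀ j, Ui j + (ω ^ 2 : ℂ) * G.mulVec W j ≠ 0) ∧
    (ω ^ 2 * rowSumNorm (G * Matrix.diagonal v) < 1 / 2 →
      ∀ X Xh : Fin m → ℂ,
        X = (Matrix.diagonal v).mulVec
          (((1 - (ω ^ 2 : ℂ) • (G * Matrix.diagonal v))⁻¹).mulVec Ui) →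
        supNorm (Xh - X) ≤ c * ε →
        (1 - 2 * (ω ^ 2 * rowSumNorm (G * Matrix.diagonal v))) /
            (1 - ω ^ 2 * rowSumNorm (G * Matrix.diagonal v)) >
          ω ^ 2 * c * ε * rowSumNorm G →
        ω ^ 2 * supNorm (G.mulVec Xh) < 1 ∧
        (∀ j, Ui j + (ω ^ 2 : ℂ) * G.mulVec Xh j ≠ 0) ∧
        (∀ j, Xh j / (Ui j + (ω ^ 2 : ℂ) * G.mulVec Xh j) ≠ 0 ↔ Xh j ≠ 0)) :=
  stmt_7_general m ω ε c G v Ui hUi
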